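/- arXiv:1012.1744 — 2 statements merged into one kernel-verified Lean document; each statement's English description precedes it below -/
import Mathlib

section
/- Every subgroup of finite index in a finitely presented group is itself finitely presented. Precisely: if G is a group admitting a finite presentation (i.e., G is isomorphic to the quotient of a finitely generated free group by the normal closure of a finite set of relators) and H is a subgroup of G with finite index [G : H], then H also admits a finite presentation. -/
/-- A group `G` is finitely presented if there exist `n : ℕ` and a finite set `R`
of elements of the free group on `n` generators such that `G` is isomorphic to the
quotient of the free group by the normal closure of `R`. -/
def FinitelyPresented (G : Type*) [Group G] : Prop :=
  ∃ (n : ℕ) (R : Set (FreeGroup (Fin n))), R.Finite ∧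
    Nonempty (G ≃* FreeGroup (Fin n) ⧸ Subgroup.normalClosure R)

/-- A finitely generated free group has a finite type of generators. -/
private lemma finite_of_fg_freeGroup {ι : Type*} (h : Group.FG (FreeGroup ι)) : Finite ι := by
  have hsurj : Function.Surjective (Abelianization.of (G := FreeGroup ι)) := fun x =>
    Quotient.inductionOn' x fun g => ⟨g, rfl⟩
  have h1 : Group.FG (Abelianization (FreeGroup ι)) :=
    @Group.fg_of_surjective _ _ _ _ h _ hsurj
  have h3 : AddGroup.FG (FreeAbelianGroup ι) := GroupFG.iff_add_fg.mp h1
  have h2 : AddGroup.FG (ι →₀ ℤ) :=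
    @AddGroup.fg_of_surjective _ _ _ _ h3 (FreeAbelianGroup.equivFinsupp ι).toAddMonoidHom
      (FreeAbelianGroup.equivFinsupp ι).surjective
  have : Module.Finite ℤ (ι →₀ ℤ) := Module.Finite.iff_addGroup_fg.mpr h2
  exact Module.Finite.finite_basis (Finsupp.basisSingleOne (R := ℤ) (ι := ι))

/-- Every subgroup of finite index in a finitely presented group is finitely presented. -/
theorem finitelyPresented_of_finiteIndex {G : Type*} [Group G]
    (hG : FinitelyPresented G) (H : Subgroup G) (hH : Finite (G ⧸ H)) :
    FinitelyPresented H := by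
  classical
  obtain ⟨n, R, hRfin, ⟨e⟩⟩ := hG
  let F := FreeGroup (Fin n)
  let N : Subgroup F := Subgroup.normalClosure R
  let π : F →* F ⧸ N := QuotientGroup.mk' N
  have hπ : Function.Surjective π := QuotientGroup.mk'_surjective N
  let H' : Subgroup (F ⧸ N) := H.map (e : G →* F ⧸ N)
  let K : Subgroup F := H'.comap π
  -- index facts
  have hHi : H.index ≠ 0 := Subgroup.index_ne_zero_of_finite
  have hH'i : H'.index = H.index :=
    Subgroup.index_map_eq H e.surjective
      (by rw [(MonoidHom.ker_eq_bot_iff (e : G →* F ⧸ N)).mpr e.injective]; exact bot_le)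
  have hKi : K.index = H'.index := Subgroup.index_comap_of_surjective H' hπ
  haveI hKfi : K.FiniteIndex := ⟨by rw [hKi, hH'i]; exact hHi⟩
  haveI : Group.FG F :=
    Group.fg_iff.mpr ⟨Set.range FreeGroup.of, FreeGroup.closure_range_of _, Set.finite_range _⟩
  haveI hKfg : Group.FG K := Subgroup.fg_of_index_ne_zero K
  haveI : IsFreeGroup K := inferInstance
  -- K is free of finite rank
  have hgenfin : Finite (IsFreeGroup.Generators K) :=
    finite_of_fg_freeGroup
      (Group.fg_of_surjective (f := (IsFreeGroup.toFreeGroup K).toMonoidHom)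
        (IsFreeGroup.toFreeGroup K).surjective)
  haveI := hgenfin
  haveI : Fintype (IsFreeGroup.Generators K) := Fintype.ofFinite _
  set m := Fintype.card (IsFreeGroup.Generators K) with hm
  let φ : K ≃* FreeGroup (Fin m) :=
    (IsFreeGroup.toFreeGroup K).trans
      (FreeGroup.freeGroupCongr (Fintype.equivFin (IsFreeGroup.Generators K)))
  -- N ≤ K and the transversal conjugates
  have hNK : N ≤ K := by
    intro x hx
    have hx1 : π x = 1 := by
      rwa [← MonoidHom.mem_ker, QuotientGroup.ker_mk']
    show π x ∈ H'
    rw [hx1]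
    exact H'.one_mem
  haveI : Finite (F ⧸ K) := K.finite_quotient_of_finiteIndex
  -- decomposition f = k * t with t = (out (mk f⁻¹))⁻¹
  have key : ∀ f : F, f * ((QuotientGroup.mk f⁻¹ : F ⧸ K)).out ∈ K := by
    intro f
    have h1 : (QuotientGroup.mk ((QuotientGroup.mk f⁻¹ : F ⧸ K)).out : F ⧸ K)
        = QuotientGroup.mk f⁻¹ := QuotientGroup.out_eq' _
    have h2 : ((QuotientGroup.mk f⁻¹ : F ⧸ K)).out⁻¹ * f⁻¹ ∈ K := by
      rw [QuotientGroup.eq] at h1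
      exact h1
    have := K.inv_mem h2
    rw [mul_inv_rev, inv_inv, inv_inv] at this
    exact this
  let S : Set F := ⋃ x : F ⧸ K, (fun r => x.out⁻¹ * r * x.out) '' R
  have hSdef : S = ⋃ x : F ⧸ K, (fun r => x.out⁻¹ * r * x.out) '' R := rfl
  have hSfin : S.Finite := Set.finite_iUnion fun x => hRfin.image _
  have hSN : S ⊆ N := by
    rintro s hs
    simp only [hSdef, Set.mem_iUnion, Set.mem_image] at hs
    obtain ⟨x, r, hr, rfl⟩ := hs
    have := Subgroup.normalClosure_normal.conj_mem r (Subgroup.subset_normalClosure hr)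
      (Quotient.out x)⁻¹
    rw [inv_inv] at this
    exact this
  have hSK : S ⊆ K := fun s hs => hNK (hSN hs)
  let S' : Set K := {k : K | (k : F) ∈ S}
  have hS'fin : S'.Finite := by
    have : S' = (K.subtype) ⁻¹' S := rfl
    rw [this]
    exact hSfin.preimage (Subtype.coe_injective.injOn)
  -- the normal closure of S' in K maps onto N
  have hmap : Subgroup.map K.subtype (Subgroup.normalClosure S') = N := by
    apply le_antisymm
    · have h1 : Subgroup.normalClosure S' ≤ N.subgroupOf K := by
        apply Subgroup.normalClosure_le_normal
        intro k hk
        exact Subgroup.mem_subgroupOf.mpr (hSN hk)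
      calc Subgroup.map K.subtype (Subgroup.normalClosure S')
          ≤ Subgroup.map K.subtype (N.subgroupOf K) := Subgroup.map_mono h1
        _ = N ⊓ K := Subgroup.subgroupOf_map_subtype N K
        _ ≤ N := inf_le_left
    · show Subgroup.normalClosure R ≤ _
      refine (Subgroup.closure_le _).mpr ?_
      intro c hc
      obtain ⟨r, hrR, hconj⟩ := Group.mem_conjugatesOfSet_iff.mp hc
      obtain ⟨f, rfl⟩ := isConj_iff.mp hconj
      set o : F := ((QuotientGroup.mk f⁻¹ : F ⧸ K)).out with ho
      have hk : f * o ∈ K := key f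
      have hsS : o⁻¹ * r * o ∈ S := by
        simp only [hSdef, Set.mem_iUnion, Set.mem_image]
        exact ⟨QuotientGroup.mk f⁻¹, r, hrR, rfl⟩
      have hs' : (⟨o⁻¹ * r * o, hSK hsS⟩ : K) ∈ Subgroup.normalClosure S' :=
        Subgroup.subset_normalClosure hsS
      have hmem : (⟨f * o, hk⟩ : K) * ⟨o⁻¹ * r * o, hSK hsS⟩ * (⟨f * o, hk⟩ : K)⁻¹ ∈
          Subgroup.normalClosure S' :=
        Subgroup.normalClosure_normal.conj_mem _ hs' _
      refine ⟨_, hmem, ?_⟩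
      show (f * o) * (o⁻¹ * r * o) * (f * o)⁻¹ = f * r * f⁻¹
      rw [mul_inv_rev, mul_assoc, mul_assoc, mul_assoc, mul_assoc, mul_assoc, mul_inv_cancel_left,
        mul_inv_cancel_left, ← mul_assoc]
  have hNsub : N.subgroupOf K = Subgroup.normalClosure S' := by
    rw [← hmap, Subgroup.subgroupOf, Subgroup.comap_map_eq_self_of_injective K.subtype_injective]
  -- H' ≃ K ⧸ normalClosure S'
  let ψ : K →* H' := (π.comp K.subtype).codRestrict H' (fun k => k.2)
  have hψsurj : Function.Surjective ψ := by
    rintro ⟨h, hh⟩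
    obtain ⟨f, hf⟩ := hπ h
    exact ⟨⟨f, show π f ∈ H' from hf ▸ hh⟩, Subtype.ext hf⟩
  have hψker : ψ.ker = N.subgroupOf K := by
    ext k
    simp only [MonoidHom.mem_ker, Subgroup.mem_subgroupOf]
    constructor
    · intro hk
      have : π (k : F) = 1 := congrArg Subtype.val hk
      rwa [← MonoidHom.mem_ker, QuotientGroup.ker_mk'] at this
    · intro hk
      apply Subtype.ext
      show π (k : F) = 1
      rwa [← MonoidHom.mem_ker, QuotientGroup.ker_mk']
  have eH' : H' ≃* K ⧸ Subgroup.normalClosure S' :=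
    (QuotientGroup.quotientKerEquivOfSurjective ψ hψsurj).symm.trans
      (QuotientGroup.quotientMulEquivOfEq (hψker.trans hNsub))
  -- transport along φ to a free group of finite rank
  have hmapφ : Subgroup.map (φ : K →* FreeGroup (Fin m)) (Subgroup.normalClosure S')
      = Subgroup.normalClosure ((φ : K →* FreeGroup (Fin m)) '' S') :=
    Subgroup.map_normalClosure S' (φ : K →* FreeGroup (Fin m)) φ.surjective
  refine ⟨m, (φ : K →* FreeGroup (Fin m)) '' S', hS'fin.image _, ⟨?_⟩⟩
  exact ((e.subgroupMap H).trans eH').trans (QuotientGroup.congr _ _ φ hmapφ)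
end

section
/- If G is a finitely presented group, then its Schur multiplier, i.e., the second group homology H₂(G, ℤ) of G with trivial integer coefficients, is a finitely generated abelian group (equivalently, a finitely presented group). -/
/-- The kernel of the canonical presentation `FreeGroup G → G` of a group `G`. -/
def presentationKernel (G : Type*) [Group G] : Subgroup (FreeGroup G) :=
  (FreeGroup.lift (id : G → G)).ker

/-- The Schur multiplier `M(G) = H₂(G, ℤ)` of a group `G`, realized via Hopf's formula:
for the canonical presentation `G ≅ F/R` with `F` the free group on the underlying set
of `G`, `M(G) = (R ⊓ [F, F]) / [F, R]`. -/
def SchurMultiplier (G : Type*) [Group G] : Type _ :=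
  ↥(presentationKernel G ⊓ commutator (FreeGroup G)) ⧸
    ((⁅(⊤ : Subgroup (FreeGroup G)), presentationKernel G⁆).subgroupOf
      (presentationKernel G ⊓ commutator (FreeGroup G)))

instance (G : Type*) [Group G] : (presentationKernel G).Normal :=
  MonoidHom.normal_ker _

noncomputable instance (G : Type*) [Group G] : Group (SchurMultiplier G) := by
  unfold SchurMultiplier; infer_instance

/-! ### Auxiliary material

We prove Hopf's theorem: the Hopf quotient `(ker f ⊓ [F,F]) ⧸ [F, ker f]` does not depend
(up to isomorphism) on the chosen free presentation `f : F ↠ G`, and for a finite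
presentation it is a finitely generated abelian group, hence finitely presented. -/

open Subgroup Function
open scoped commutatorElement

namespace SchurAux

section Generalities

variable {X : Type*} [Group X]

/-- If a generating set consists of pairwise commuting elements, the group is abelian. -/
theorem comm_of_closure {s : Set X}
    (hcomm : ∀ a ∈ s, ∀ b ∈ s, Commute a b) (hs : Subgroup.closure s = ⊤)
    (a b : X) : Commute a b := by
  have key : ∀ a ∈ Subgroup.closure s, ∀ b ∈ Subgroup.closure s, Commute a b := by
    intro a ha
    refine Subgroup.closure_induction
      (p := fun a _ => ∀ b ∈ Subgroup.closure s, Commute a b) ?_ ?_ ?_ ?_ ha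
    · intro x hx b hb
      refine Subgroup.closure_induction (p := fun b _ => Commute x b) ?_ ?_ ?_ ?_ hb
      · exact fun y hy => hcomm x hx y hy
      · exact Commute.one_right x
      · exact fun y z _ _ h1 h2 => h1.mul_right h2
      · exact fun y _ h => h.inv_right
    · exact fun b _ => Commute.one_left b
    · exact fun x y _ _ h1 h2 b hb => (h1 b hb).mul_left (h2 b hb)
    · exact fun x _ h b hb => (h b hb).inv_left
  exact key a (hs ▸ Subgroup.mem_top a) b (hs ▸ Subgroup.mem_top b)

/-- Every subgroup of a finitely generated commutative group is finitely generated. -/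
theorem subgroup_fg_of_comm {H : Type*} [Group H] (hc : ∀ a b : H, a * b = b * a)
    (hfg : Group.FG H) (K : Subgroup H) : K.FG := by
  letI : CommGroup H := { ‹Group H› with mul_comm := hc }
  haveI : AddGroup.FG (Additive H) := GroupFG.iff_add_fg.mp hfg
  haveI : Module.Finite ℤ (Additive H) := Module.Finite.iff_addGroup_fg.mpr this
  rw [Subgroup.fg_iff_add_fg]
  have h1 : (AddSubgroup.toIntSubmodule
      (K.toAddSubgroup : AddSubgroup (Additive H))).FG := IsNoetherian.noetherian _
  rwa [Submodule.fg_iff_addSubgroup_fg, AddSubgroup.toIntSubmodule_toAddSubgroup] at h1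

theorem quot_comm_of_commutator_le {N : Subgroup X} [N.Normal]
    (h : commutator X ≤ N) (a b : X ⧸ N) : a * b = b * a := by
  refine QuotientGroup.induction_on a fun x => ?_
  refine QuotientGroup.induction_on b fun y => ?_
  rw [← QuotientGroup.mk_mul, ← QuotientGroup.mk_mul, QuotientGroup.eq]
  have hv : (x * y)⁻¹ * (y * x) = ⁅y⁻¹, x⁻¹⁆ := by group
  rw [hv]
  exact h (by
    rw [_root_.commutator_def]
    exact Subgroup.commutator_mem_commutator (Subgroup.mem_top _) (Subgroup.mem_top _))

/-- A finitely generated group in which all elements commute is finitely presented. -/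
theorem fp_of_fg_comm {H : Type*} [Group H] (hc : ∀ a b : H, a * b = b * a)
    (hfg : Group.FG H) : FinitelyPresented H := by
  classical
  obtain ⟨S, hStop, hSfin⟩ := Group.fg_iff.mp hfg
  haveI := hSfin.fintype
  set m := hSfin.toFinset.card with hm
  set φ : FreeGroup (Fin m) →* H :=
    FreeGroup.lift (fun i => ((hSfin.toFinset.equivFin.symm i : hSfin.toFinset) : H)) with hφ
  have hφof : ∀ i, φ (FreeGroup.of i) = ((hSfin.toFinset.equivFin.symm i : hSfin.toFinset) : H) :=
    fun i => FreeGroup.lift_apply_of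
  have hsurj : Surjective φ := by
    rw [← MonoidHom.range_eq_top, eq_top_iff, ← hStop, Subgroup.closure_le]
    intro s hs
    have hs' : s ∈ hSfin.toFinset := hSfin.mem_toFinset.mpr hs
    refine ⟨FreeGroup.of (hSfin.toFinset.equivFin ⟨s, hs'⟩), ?_⟩
    rw [hφof, Equiv.symm_apply_apply]
  -- commutators of the generators
  set Cset : Set (FreeGroup (Fin m)) :=
    Set.range (fun p : Fin m × Fin m => ⁅FreeGroup.of p.1, FreeGroup.of p.2⁆) with hCset
  have hCfin : Cset.Finite := Set.finite_range _
  have hCcomm : commutator (FreeGroup (Fin m)) ≤ Subgroup.normalClosure Cset := by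
    rw [_root_.commutator_def, Subgroup.commutator_le]
    intro g1 _ g2 _
    rw [← QuotientGroup.eq_one_iff]
    have : ∀ a b : FreeGroup (Fin m) ⧸ Subgroup.normalClosure Cset, Commute a b := by
      refine comm_of_closure (s := QuotientGroup.mk '' Set.range (FreeGroup.of)) ?_ ?_
      · rintro _ ⟨_, ⟨i, rfl⟩, rfl⟩ _ ⟨_, ⟨j, rfl⟩, rfl⟩
        have h1 : ((⁅FreeGroup.of i, FreeGroup.of j⁆ : FreeGroup (Fin m)) :
            FreeGroup (Fin m) ⧸ Subgroup.normalClosure Cset) = 1 :=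
          (QuotientGroup.eq_one_iff _).mpr (Subgroup.subset_normalClosure ⟨(i, j), rfl⟩)
        rw [← commutatorElement_eq_one_iff_commute]
        simpa [commutatorElement_def] using h1
      · have : QuotientGroup.mk '' Set.range (FreeGroup.of) =
            (QuotientGroup.mk' (Subgroup.normalClosure Cset)) '' Set.range (FreeGroup.of) := rfl
        rw [this, ← MonoidHom.map_closure, FreeGroup.closure_range_of,
          ← MonoidHom.range_eq_map, MonoidHom.range_eq_top]
        exact QuotientGroup.mk'_surjective _
    show (QuotientGroup.mk' (Subgroup.normalClosure Cset)) ⁅g1, g2⁆ = 1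
    rw [map_commutatorElement, commutatorElement_eq_one_iff_commute]
    exact this _ _
  have hCker : Cset ⊆ (φ.ker : Set (FreeGroup (Fin m))) := by
    rintro _ ⟨⟨i, j⟩, rfl⟩
    rw [SetLike.mem_coe, MonoidHom.mem_ker, map_commutatorElement,
      commutatorElement_eq_one_iff_commute]
    exact hc _ _
  -- the abelianization of the free group
  set ab : FreeGroup (Fin m) →* FreeGroup (Fin m) ⧸ commutator (FreeGroup (Fin m)) :=
    QuotientGroup.mk' (commutator (FreeGroup (Fin m))) with hab
  have habker : ab.ker = commutator (FreeGroup (Fin m)) := QuotientGroup.ker_mk' _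
  have habcomm : ∀ a b : FreeGroup (Fin m) ⧸ commutator (FreeGroup (Fin m)), a * b = b * a :=
    quot_comm_of_commutator_le le_rfl
  have hFfg : Group.FG (FreeGroup (Fin m)) := by
    rw [Group.fg_iff]
    exact ⟨Set.range FreeGroup.of, FreeGroup.closure_range_of _, Set.finite_range _⟩
  have habfg : Group.FG (FreeGroup (Fin m) ⧸ commutator (FreeGroup (Fin m))) := by
    haveI := hFfg
    exact Group.fg_of_surjective (QuotientGroup.mk'_surjective _)
  -- the image of the kernel in the abelianization is finitely generated
  obtain ⟨S', hS'⟩ := subgroup_fg_of_comm habcomm habfg (φ.ker.map ab)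
  have hpre : ∀ s ∈ S', ∃ t, t ∈ φ.ker ∧ ab t = s := by
    intro s hs
    have : s ∈ φ.ker.map ab := hS' ▸ Subgroup.subset_closure hs
    obtain ⟨t, ht, rfl⟩ := this
    exact ⟨t, ht, rfl⟩
  set u : {s // s ∈ S'} → FreeGroup (Fin m) := fun s => (hpre s s.2).choose with hu
  have hu1 : ∀ s, u s ∈ φ.ker := fun s => (hpre s s.2).choose_spec.1
  have hu2 : ∀ s, ab (u s) = s := fun s => (hpre s s.2).choose_spec.2
  set T : Set (FreeGroup (Fin m)) := Set.range u with hT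
  have hTfin : T.Finite := Set.finite_range _
  have hTker : T ⊆ (φ.ker : Set (FreeGroup (Fin m))) := by rintro _ ⟨s, rfl⟩; exact hu1 s
  have habT : ab '' T = (S' : Set _) := by
    apply Set.Subset.antisymm
    · rintro _ ⟨_, ⟨s, rfl⟩, rfl⟩; rw [hu2]; exact s.2
    · rintro s hs; exact ⟨u ⟨s, hs⟩, ⟨⟨s, hs⟩, rfl⟩, hu2 _⟩
  -- the kernel equals the normal closure of `Cset ∪ T`
  have hker : φ.ker = Subgroup.normalClosure (Cset ∪ T) := by
    apply le_antisymm
    · intro x hx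
      have h1 : ab x ∈ Subgroup.closure (ab '' T) := by
        rw [habT, hS']
        exact Subgroup.mem_map_of_mem ab hx
      rw [← MonoidHom.map_closure] at h1
      obtain ⟨y, hy, hxy⟩ := h1
      have h2 : x * y⁻¹ ∈ Subgroup.normalClosure (Cset ∪ T) := by
        apply hCcomm.trans (Subgroup.normalClosure_mono Set.subset_union_left)
        rw [← habker, MonoidHom.mem_ker, map_mul, map_inv, hxy, mul_inv_cancel]
      have h3 : y ∈ Subgroup.normalClosure (Cset ∪ T) :=
        ((Subgroup.closure_le _).mpr
          ((Set.subset_union_right).trans Subgroup.subset_normalClosure)) hy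
      simpa using Subgroup.mul_mem _ h2 h3
    · exact Subgroup.normalClosure_le_normal (Set.union_subset hCker hTker)
  exact ⟨m, Cset ∪ T, hCfin.union hTfin,
    ⟨((QuotientGroup.quotientKerEquivOfSurjective φ hsurj).symm).trans
      (QuotientGroup.quotientMulEquivOfEq hker)⟩⟩

end Generalities

section Hopf

variable {G : Type*} [Group G] {F : Type*} [Group F] {F' : Type*} [Group F']

/-- The Hopf quotient `(R ⊓ [F,F]) ⧸ [F,R]` for a morphism `f : F → G` with `R = ker f`. -/
abbrev HopfQ (f : F →* G) : Type _ :=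
  ↥(f.ker ⊓ commutator F) ⧸
    ((⁅(⊤ : Subgroup F), f.ker⁆).subgroupOf (f.ker ⊓ commutator F))

/-- The quotient `R ⧸ [F,R]`. -/
abbrev Q0 (f : F →* G) : Type _ :=
  ↥f.ker ⧸ ((⁅(⊤ : Subgroup F), f.ker⁆).subgroupOf f.ker)

/-- Commutativity for quotients of the shape `A ⧸ [⊤,K]` with `A ≤ K`. -/
theorem quot_comm {K A : Subgroup F} [K.Normal] (hAK : A ≤ K)
    (a b : ↥A ⧸ ((⁅(⊤ : Subgroup F), K⁆).subgroupOf A)) : a * b = b * a := by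
  refine QuotientGroup.induction_on a fun x => ?_
  refine QuotientGroup.induction_on b fun y => ?_
  rw [← QuotientGroup.mk_mul, ← QuotientGroup.mk_mul, QuotientGroup.eq,
    Subgroup.mem_subgroupOf]
  have hv : (((x * y)⁻¹ * (y * x) : ↥A) : F) = ⁅((y : F))⁻¹, ((x : F))⁻¹⁆ := by
    push_cast
    group
  rw [hv]
  exact Subgroup.commutator_mem_commutator (Subgroup.mem_top _) (inv_mem (hAK x.2))

theorem comp_mem_aux {f : F →* G} {f' : F' →* G} (φ : F →* F') (hφ : f'.comp φ = f)
    {x : F} (hx : x ∈ f.ker ⊓ commutator F) : φ x ∈ f'.ker ⊓ commutator F' := by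
  refine Subgroup.mem_inf.mpr ⟨?_, ?_⟩
  · rw [MonoidHom.mem_ker, ← MonoidHom.comp_apply, hφ]
    exact hx.1
  · have h : (commutator F).map φ ≤ commutator F' := by
      rw [_root_.commutator_def, Subgroup.map_commutator, _root_.commutator_def]
      exact Subgroup.commutator_mono le_top le_top
    exact h (Subgroup.mem_map_of_mem φ hx.2)

theorem comp_commutator_aux {f : F →* G} {f' : F' →* G} (φ : F →* F') (hφ : f'.comp φ = f)
    {x : F} (hx : x ∈ ⁅(⊤ : Subgroup F), f.ker⁆) :
    φ x ∈ ⁅(⊤ : Subgroup F'), f'.ker⁆ := by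
  have h : (⁅(⊤ : Subgroup F), f.ker⁆).map φ ≤ ⁅(⊤ : Subgroup F'), f'.ker⁆ := by
    rw [Subgroup.map_commutator]
    refine Subgroup.commutator_mono le_top ?_
    rintro _ ⟨y, hy, rfl⟩
    rw [MonoidHom.mem_ker, ← MonoidHom.comp_apply, hφ]
    exact hy
  exact h (Subgroup.mem_map_of_mem φ hx)

/-- The comparison homomorphism between Hopf quotients induced by a morphism over `G`. -/
def compHom {f : F →* G} {f' : F' →* G} (φ : F →* F') (hφ : f'.comp φ = f) :
    HopfQ f →* HopfQ f' :=
  QuotientGroup.lift _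
    ((QuotientGroup.mk' _).comp
      ((φ.domRestrict (f.ker ⊓ commutator F)).codRestrict (f'.ker ⊓ commutator F')
        (fun x => comp_mem_aux φ hφ x.2)))
    (by
      intro x hx
      rw [Subgroup.mem_subgroupOf] at hx
      rw [MonoidHom.mem_ker, MonoidHom.comp_apply, QuotientGroup.mk'_apply,
        QuotientGroup.eq_one_iff, Subgroup.mem_subgroupOf]
      exact comp_commutator_aux φ hφ hx)

@[simp]
theorem compHom_mk {f : F →* G} {f' : F' →* G} (φ : F →* F') (hφ : f'.comp φ = f)
    (z : ↥(f.ker ⊓ commutator F)) :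
    compHom φ hφ (QuotientGroup.mk z) =
      QuotientGroup.mk ⟨φ (z : F), comp_mem_aux φ hφ z.2⟩ := rfl

theorem theta_mem {f : F →* G} {θ : F →* F} (hθ : f.comp θ = f) (x : F) :
    θ x * x⁻¹ ∈ f.ker := by
  rw [MonoidHom.mem_ker, map_mul, map_inv, ← MonoidHom.comp_apply, hθ]
  simp

/-- The "difference" homomorphism `x ↦ θ(x)x⁻¹ mod [F, R]`. -/
def dHom {f : F →* G} (θ : F →* F) (hθ : f.comp θ = f) : F →* Q0 f where
  toFun x := QuotientGroup.mk ⟨θ x * x⁻¹, theta_mem hθ x⟩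
  map_one' := by
    rw [QuotientGroup.eq_one_iff, Subgroup.mem_subgroupOf]
    simpa using one_mem _
  map_mul' x y := by
    rw [← QuotientGroup.mk_mul, QuotientGroup.eq, Subgroup.mem_subgroupOf]
    have hmem : y * (θ y)⁻¹ ∈ f.ker := by
      simpa using f.ker.inv_mem (theta_mem hθ y)
    have hv : ((((⟨θ (x * y) * (x * y)⁻¹, theta_mem hθ (x * y)⟩ : ↥f.ker))⁻¹ *
        (⟨θ x * x⁻¹, theta_mem hθ x⟩ * ⟨θ y * y⁻¹, theta_mem hθ y⟩) : ↥f.ker) : F) =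
        ⁅x, y * (θ y)⁻¹⁆ := by
      push_cast
      rw [map_mul]
      group
    rw [hv]
    exact Subgroup.commutator_mem_commutator (Subgroup.mem_top _) hmem

theorem theta_eq_mod {f : F →* G} (θ : F →* F) (hθ : f.comp θ = f)
    {x : F} (hx : x ∈ commutator F) : θ x * x⁻¹ ∈ ⁅(⊤ : Subgroup F), f.ker⁆ := by
  have h1 : commutator F ≤ (dHom θ hθ).ker := by
    rw [_root_.commutator_def, Subgroup.commutator_le]
    intro g1 _ g2 _
    rw [MonoidHom.mem_ker, map_commutatorElement, commutatorElement_eq_one_iff_commute]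
    exact quot_comm le_rfl _ _
  have h2 : (QuotientGroup.mk (⟨θ x * x⁻¹, theta_mem hθ x⟩ : ↥f.ker) : Q0 f) = 1 := h1 hx
  rw [QuotientGroup.eq_one_iff, Subgroup.mem_subgroupOf] at h2
  exact h2

/-- Any endomorphism over `G` induces the identity on the Hopf quotient. -/
theorem compHom_self {f : F →* G} (θ : F →* F) (hθ : f.comp θ = f) (x : HopfQ f) :
    compHom θ hθ x = x := by
  refine QuotientGroup.induction_on x fun z => ?_
  rw [compHom_mk, QuotientGroup.eq, Subgroup.mem_subgroupOf]
  have h := theta_eq_mod θ hθ z.2.2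
  have h2 : (((⟨θ (z : F), comp_mem_aux θ hθ z.2⟩ : ↥(f.ker ⊓ commutator F))⁻¹ * z :
      ↥(f.ker ⊓ commutator F)) : F) =
      (θ (z : F))⁻¹ * (θ (z : F) * ((z : F))⁻¹)⁻¹ * ((θ (z : F))⁻¹)⁻¹ := by
    push_cast
    group
  rw [h2]
  exact (Subgroup.commutator_normal ⊤ f.ker).conj_mem _ (inv_mem h) _

theorem compHom_comp {F'' : Type*} [Group F''] {f : F →* G} {f' : F' →* G} {f'' : F'' →* G}
    (φ : F →* F') (ψ : F' →* F'') (hφ : f'.comp φ = f) (hψ : f''.comp ψ = f')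
    (x : HopfQ f) :
    compHom ψ hψ (compHom φ hφ x) =
      compHom (ψ.comp φ) (by rw [← MonoidHom.comp_assoc, hψ, hφ]) x := by
  refine QuotientGroup.induction_on x fun z => ?_
  rfl

/-- Hopf quotients for two free presentations of the same group are isomorphic. -/
noncomputable def hopfEquiv {A B : Type*} (f : FreeGroup A →* G) (f' : FreeGroup B →* G)
    (hf : Surjective f) (hf' : Surjective f') : HopfQ f ≃* HopfQ f' := by
  set α : FreeGroup A →* FreeGroup B :=
    FreeGroup.lift (fun a => surjInv hf' (f (FreeGroup.of a))) with hα
  have hαc : f'.comp α = f := by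
    refine FreeGroup.ext_hom _ _ fun a => ?_
    rw [MonoidHom.comp_apply, hα, FreeGroup.lift_apply_of]
    exact surjInv_eq hf' _
  set β : FreeGroup B →* FreeGroup A :=
    FreeGroup.lift (fun b => surjInv hf (f' (FreeGroup.of b))) with hβ
  have hβc : f.comp β = f' := by
    refine FreeGroup.ext_hom _ _ fun b => ?_
    rw [MonoidHom.comp_apply, hβ, FreeGroup.lift_apply_of]
    exact surjInv_eq hf _
  refine MonoidHom.toMulEquiv (compHom α hαc) (compHom β hβc) ?_ ?_
  · refine MonoidHom.ext fun x => ?_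
    rw [MonoidHom.comp_apply, compHom_comp, MonoidHom.id_apply]
    exact compHom_self _ (by rw [← MonoidHom.comp_assoc, hβc, hαc]) x
  · refine MonoidHom.ext fun x => ?_
    rw [MonoidHom.comp_apply, compHom_comp, MonoidHom.id_apply]
    exact compHom_self _ (by rw [← MonoidHom.comp_assoc, hαc, hβc]) x

/-- The natural injection of the Hopf quotient into `R ⧸ [F,R]`. -/
def incQ (f : F →* G) : HopfQ f →* Q0 f :=
  QuotientGroup.lift _
    ((QuotientGroup.mk' _).comp (Subgroup.inclusion inf_le_left))
    (by
      intro x hx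
      rw [Subgroup.mem_subgroupOf] at hx
      rw [MonoidHom.mem_ker, MonoidHom.comp_apply, QuotientGroup.mk'_apply,
        QuotientGroup.eq_one_iff, Subgroup.mem_subgroupOf]
      exact hx)

theorem incQ_injective (f : F →* G) : Injective (incQ f) := by
  rw [injective_iff_map_eq_one]
  intro a
  refine QuotientGroup.induction_on a fun z => ?_
  intro hz
  have hz' : (QuotientGroup.mk (Subgroup.inclusion (inf_le_left (b := commutator F)) z) :
      Q0 f) = 1 := hz
  rw [QuotientGroup.eq_one_iff, Subgroup.mem_subgroupOf] at hz'
  rw [QuotientGroup.eq_one_iff, Subgroup.mem_subgroupOf]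
  exact hz'

theorem q0_fg {n : ℕ} (f : FreeGroup (Fin n) →* G) (R : Set (FreeGroup (Fin n)))
    (hR : R.Finite) (hker : f.ker = Subgroup.normalClosure R) : Group.FG (Q0 f) := by
  rw [Group.fg_iff]
  refine ⟨QuotientGroup.mk '' (Subtype.val ⁻¹' R : Set ↥f.ker), ?_,
    Set.Finite.image _ (hR.preimage Subtype.val_injective.injOn)⟩
  rw [eq_top_iff]
  rintro q -
  refine QuotientGroup.induction_on q fun z => ?_
  set S : Set (Q0 f) := QuotientGroup.mk '' (Subtype.val ⁻¹' R : Set ↥f.ker) with hS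
  have hz : (z : FreeGroup (Fin n)) ∈ Subgroup.closure (Group.conjugatesOfSet R) := by
    have h1 : (z : FreeGroup (Fin n)) ∈ Subgroup.normalClosure R := by
      rw [← hker]; exact z.2
    exact h1
  have key : ∀ x, x ∈ Subgroup.closure (Group.conjugatesOfSet R) →
      ∃ h : x ∈ f.ker, (QuotientGroup.mk ⟨x, h⟩ : Q0 f) ∈ Subgroup.closure S := by
    intro x hx
    refine Subgroup.closure_induction
      (p := fun x _ => ∃ h : x ∈ f.ker, (QuotientGroup.mk ⟨x, h⟩ : Q0 f) ∈ Subgroup.closure S)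
      ?_ ?_ ?_ ?_ hx
    · rintro x hxc
      obtain ⟨a, ha, hconj⟩ := Group.mem_conjugatesOfSet_iff.mp hxc
      obtain ⟨c, rfl⟩ := isConj_iff.mp hconj
      have haker : a ∈ f.ker := by
        rw [hker]
        exact Subgroup.subset_normalClosure ha
      have hxker : c * a * c⁻¹ ∈ f.ker := (MonoidHom.normal_ker f).conj_mem a haker c
      refine ⟨hxker, ?_⟩
      have heq : (QuotientGroup.mk ⟨c * a * c⁻¹, hxker⟩ : Q0 f) =
          QuotientGroup.mk ⟨a, haker⟩ := by
        rw [QuotientGroup.eq, Subgroup.mem_subgroupOf]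
        have hv : (((⟨c * a * c⁻¹, hxker⟩ : ↥f.ker)⁻¹ * ⟨a, haker⟩ : ↥f.ker) :
            FreeGroup (Fin n)) = ⁅c, a⁻¹⁆ := by
          push_cast
          group
        rw [hv]
        exact Subgroup.commutator_mem_commutator (Subgroup.mem_top _) (inv_mem haker)
      rw [heq]
      exact Subgroup.subset_closure ⟨⟨a, haker⟩, ha, rfl⟩
    · refine ⟨one_mem _, ?_⟩
      have : (⟨(1 : FreeGroup (Fin n)), one_mem _⟩ : ↥f.ker) = 1 := rfl
      rw [this, QuotientGroup.mk_one]
      exact one_mem _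
    · rintro x y hx hy ⟨hxk, hxm⟩ ⟨hyk, hym⟩
      refine ⟨mul_mem hxk hyk, ?_⟩
      have : (⟨x * y, mul_mem hxk hyk⟩ : ↥f.ker) = ⟨x, hxk⟩ * ⟨y, hyk⟩ := rfl
      rw [this, QuotientGroup.mk_mul]
      exact mul_mem hxm hym
    · rintro x hx ⟨hxk, hxm⟩
      refine ⟨inv_mem hxk, ?_⟩
      have : (⟨x⁻¹, inv_mem hxk⟩ : ↥f.ker) = (⟨x, hxk⟩ : ↥f.ker)⁻¹ := rfl
      rw [this, QuotientGroup.mk_inv]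
      exact inv_mem hxm
  obtain ⟨h, hm⟩ := key _ hz
  have : (⟨(z : FreeGroup (Fin n)), h⟩ : ↥f.ker) = z := Subtype.ext rfl
  rw [this] at hm
  exact hm

theorem hopf_fg {n : ℕ} (f : FreeGroup (Fin n) →* G) (R : Set (FreeGroup (Fin n)))
    (hR : R.Finite) (hker : f.ker = Subgroup.normalClosure R) : Group.FG (HopfQ f) := by
  have hQfg : Group.FG (Q0 f) := q0_fg f R hR hker
  have hQcomm : ∀ a b : Q0 f, a * b = b * a := quot_comm le_rfl
  have hrangefg : ((incQ f).range).FG := subgroup_fg_of_comm hQcomm hQfg _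
  haveI : Group.FG ↥(incQ f).range := (Group.fg_iff_subgroup_fg _).mpr hrangefg
  exact Group.fg_of_surjective
    (f := (MulEquiv.symm (MonoidHom.ofInjective (incQ_injective f))).toMonoidHom)
    (MulEquiv.surjective _)

end Hopf

end SchurAux

/-- If `G` is a finitely presented group, then its Schur multiplier `M(G) = H₂(G, ℤ)`
is a finitely generated (abelian) group; equivalently, it is finitely presented. -/
theorem schurMultiplier_fg_of_finitelyPresented {G : Type*} [Group G]
    (hG : FinitelyPresented G) :
    Group.FG (SchurMultiplier G) ∧ FinitelyPresented (SchurMultiplier G) := by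
  classical
  obtain ⟨n, R, hRfin, ⟨e⟩⟩ := hG
  set f' : FreeGroup (Fin n) →* G :=
    (e.symm.toMonoidHom).comp (QuotientGroup.mk' (Subgroup.normalClosure R)) with hf'
  have hf'surj : Function.Surjective f' :=
    e.symm.surjective.comp (QuotientGroup.mk'_surjective _)
  have hf'ker : f'.ker = Subgroup.normalClosure R := by
    ext x
    rw [MonoidHom.mem_ker, hf', MonoidHom.comp_apply, QuotientGroup.mk'_apply,
      MulEquiv.coe_toMonoidHom, MulEquiv.map_eq_one_iff, QuotientGroup.eq_one_iff]
  set f₀ : FreeGroup G →* G := FreeGroup.lift (id : G → G) with hf₀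
  have hf₀surj : Function.Surjective f₀ := fun y => ⟨FreeGroup.of y, FreeGroup.lift_apply_of⟩
  haveI hfg' : Group.FG (SchurAux.HopfQ f') := SchurAux.hopf_fg f' R hRfin hf'ker
  have E : SchurAux.HopfQ f' ≃* SchurAux.HopfQ f₀ :=
    SchurAux.hopfEquiv f' f₀ hf'surj hf₀surj
  have hfg0 : Group.FG (SchurAux.HopfQ f₀) :=
    Group.fg_of_surjective (f := E.toMonoidHom) E.surjective
  have hcomm0 : ∀ a b : SchurAux.HopfQ f₀, a * b = b * a := SchurAux.quot_comm inf_le_left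
  exact ⟨hfg0, SchurAux.fp_of_fg_comm hcomm0 hfg0⟩
end
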